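/- arXiv:2403.14907 — 2 statements merged into one kernel-verified Lean document; each statement's English description precedes it below -/
import Mathlib

section
/- Fix a, μ, L > 0, let χ_k* = ((μL² + k²π²)/(k²π²L²))·((k²π² + aL²)/μ) for each integer k ≥ 1, let χ* = inf_{k ≥ 1} χ_k*, and let k_* = ⌊(L/π)(aμ)^{1/4}⌋. Then: if k_* = 0 then χ* = χ_1*; if k_* ≥ 1 and k_* = (L/π)(aμ)^{1/4} then χ* = χ_{k_*}*; and if k_* ≥ 1 and k_* ≠ (L/π)(aμ)^{1/4} then χ* = min(χ_{k_*}*, χ_{k_*+1}*). In particular the infimum χ* is attained at some positive integer. -/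
open Real Set

/-- The critical chemotaxis value `χ_k*`. -/
noncomputable def chiStar (a μ L : ℝ) (k : ℕ) : ℝ :=
  ((μ * L^2 + (k : ℝ)^2 * π^2) / ((k : ℝ)^2 * π^2 * L^2)) * (((k : ℝ)^2 * π^2 + a * L^2) / μ)

/-
With `s = (kπ)²` and `c = aμL⁴`, `χ_k* = (s + c / s + (a + μ) L²) / (μ L²)`, and `s ↦ s + c / s`
decreases up to `s = √c` and increases after it. In terms of `k` the turning point is
`r = (L / π) (aμ)^{1/4}`, so `k ↦ χ_k*` is antitone on `[1, ⌊r⌋]` and monotone on `[⌈r⌉, ∞)`;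
the minimum over `k ≥ 1` is therefore attained at `⌊r⌋` or `⌊r⌋ + 1`, or at `1` if `r < 1`.
-/

theorem add_div_sub_add_div {c s t : ℝ} (hs : s ≠ 0) (ht : t ≠ 0) :
    t + c / t - (s + c / s) = (t - s) * (s * t - c) / (s * t) := by
  field_simp
  ring

theorem add_div_le_add_div_of_le_mul {c s t : ℝ} (hs : 0 < s) (hst : s ≤ t) (hc : c ≤ s * t) :
    s + c / s ≤ t + c / t := by
  have ht : 0 < t := hs.trans_le hst
  have : 0 ≤ (t - s) * (s * t - c) / (s * t) :=
    div_nonneg (mul_nonneg (by linarith) (by linarith)) (by positivity)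
  linarith [add_div_sub_add_div (c := c) hs.ne' ht.ne']

theorem add_div_le_add_div_of_mul_le {c s t : ℝ} (hs : 0 < s) (hst : s ≤ t) (hc : s * t ≤ c) :
    t + c / t ≤ s + c / s := by
  have ht : 0 < t := hs.trans_le hst
  have : (t - s) * (s * t - c) / (s * t) ≤ 0 :=
    div_nonpos_of_nonpos_of_nonneg (mul_nonpos_of_nonneg_of_nonpos (by linarith) (by linarith))
      (by positivity)
  linarith [add_div_sub_add_div (c := c) hs.ne' ht.ne']

theorem pi_mul_div_pi_mul_rpow_quarter_pow_four {x : ℝ} (hx : 0 ≤ x) (L : ℝ) :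
    (π * ((L / π) * x ^ ((1 : ℝ) / 4))) ^ 4 = x * L ^ 4 := by
  have h := rpow_inv_natCast_pow hx (n := 4) (by norm_num)
  push_cast at h
  rw [← mul_assoc, mul_div_cancel₀ L pi_ne_zero, mul_pow, one_div, h, mul_comm]

section ChiStar

variable {a μ L : ℝ}

theorem chiStar_eq {k : ℕ} (hk : k ≠ 0) :
    chiStar a μ L k =
      ((k * π) ^ 2 + a * μ * L ^ 4 / (k * π) ^ 2 + (a + μ) * L ^ 2) / (μ * L ^ 2) := by
  have : (k : ℝ) * π ≠ 0 := mul_ne_zero (Nat.cast_ne_zero.mpr hk) pi_ne_zero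
  rw [chiStar, div_mul_div_comm]
  field_simp
  ring

theorem chiStar_le_chiStar_of_le_mul (hμ : 0 ≤ μ) {k l : ℕ} (hk : k ≠ 0) (hkl : k ≤ l)
    (h : a * μ * L ^ 4 ≤ (k * π) ^ 2 * (l * π) ^ 2) :
    chiStar a μ L k ≤ chiStar a μ L l := by
  have hl : l ≠ 0 := by omega
  have hkπ : 0 < ((k : ℝ) * π) ^ 2 := by positivity
  have hklπ : ((k : ℝ) * π) ^ 2 ≤ (l * π) ^ 2 := by gcongr
  rw [chiStar_eq hk, chiStar_eq hl]
  gcongr (?_ + _) / _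
  exact add_div_le_add_div_of_le_mul hkπ hklπ h

theorem chiStar_le_chiStar_of_mul_le (hμ : 0 ≤ μ) {k l : ℕ} (hk : k ≠ 0) (hkl : k ≤ l)
    (h : (k * π) ^ 2 * (l * π) ^ 2 ≤ a * μ * L ^ 4) :
    chiStar a μ L l ≤ chiStar a μ L k := by
  have hl : l ≠ 0 := by omega
  have hkπ : 0 < ((k : ℝ) * π) ^ 2 := by positivity
  have hklπ : ((k : ℝ) * π) ^ 2 ≤ (l * π) ^ 2 := by gcongr
  rw [chiStar_eq hk, chiStar_eq hl]
  gcongr (?_ + _) / _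
  exact add_div_le_add_div_of_mul_le hkπ hklπ h

section CriticalIndex

variable {r : ℝ}

theorem chiStar_antitoneOn (hμ : 0 ≤ μ) (hr : (π * r) ^ 4 = a * μ * L ^ 4) :
    AntitoneOn (chiStar a μ L) (Icc 1 ⌊r⌋₊) := by
  intro k ⟨hk, _⟩ l ⟨_, hl⟩ hkl
  have hlr : (l : ℝ) ≤ r := (Nat.le_floor_iff' (by omega)).mp hl
  have hkr : (k : ℝ) ≤ r := le_trans (by exact_mod_cast hkl) hlr
  refine chiStar_le_chiStar_of_mul_le hμ (by omega) hkl ?_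
  calc ((k : ℝ) * π) ^ 2 * (l * π) ^ 2 ≤ (r * π) ^ 2 * (r * π) ^ 2 := by gcongr
    _ = a * μ * L ^ 4 := by rw [← hr]; ring

theorem chiStar_monotoneOn (hμ : 0 ≤ μ) (hr₀ : 0 < r) (hr : (π * r) ^ 4 = a * μ * L ^ 4) :
    MonotoneOn (chiStar a μ L) (Ici ⌈r⌉₊) := by
  intro k hk l _ hkl
  have hrk : r ≤ k := Nat.ceil_le.mp hk
  have hk₀ : k ≠ 0 := (Nat.cast_pos.mp (hr₀.trans_le hrk)).ne'
  have hrl : r ≤ l := hrk.trans (by exact_mod_cast hkl)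
  refine chiStar_le_chiStar_of_le_mul hμ hk₀ hkl ?_
  calc a * μ * L ^ 4 = (r * π) ^ 2 * (r * π) ^ 2 := by rw [← hr]; ring
    _ ≤ ((k : ℝ) * π) ^ 2 * (l * π) ^ 2 := by gcongr

theorem isLeast_chiStar {k : ℕ} (hk : 1 ≤ k) (h : ∀ l, 1 ≤ l → chiStar a μ L k ≤ chiStar a μ L l) :
    IsLeast {x | ∃ l : ℕ, 1 ≤ l ∧ x = chiStar a μ L l} (chiStar a μ L k) :=
  ⟨⟨k, hk, rfl⟩, by rintro _ ⟨l, hl, rfl⟩; exact h l hl⟩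

theorem isLeast_chiStar_one (hμ : 0 ≤ μ) (hr₀ : 0 < r) (hr₁ : r < 1)
    (hr : (π * r) ^ 4 = a * μ * L ^ 4) :
    IsLeast {x | ∃ l : ℕ, 1 ≤ l ∧ x = chiStar a μ L l} (chiStar a μ L 1) := by
  have hceil : ⌈r⌉₊ ≤ 1 := Nat.ceil_le.mpr (by exact_mod_cast hr₁.le)
  exact isLeast_chiStar le_rfl fun l hl ↦
    chiStar_monotoneOn hμ hr₀ hr hceil (hceil.trans hl) hl

theorem min_chiStar_floor_le (hμ : 0 ≤ μ) (hr : (π * r) ^ 4 = a * μ * L ^ 4) (h₁ : 1 ≤ ⌊r⌋₊)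
    {l : ℕ} (hl : 1 ≤ l) :
    min (chiStar a μ L ⌊r⌋₊) (chiStar a μ L (⌊r⌋₊ + 1)) ≤ chiStar a μ L l := by
  rcases le_or_gt l ⌊r⌋₊ with hle | hgt
  · exact (min_le_left _ _).trans
      (chiStar_antitoneOn hμ hr ⟨hl, hle⟩ ⟨h₁, le_rfl⟩ hle)
  · have hr₀ : 0 < r := zero_lt_one.trans_le (Nat.floor_pos.mp h₁)
    have hceil : ⌈r⌉₊ ≤ ⌊r⌋₊ + 1 := Nat.ceil_le_floor_add_one r
    exact (min_le_right _ _).trans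
      (chiStar_monotoneOn hμ hr₀ hr hceil (hceil.trans hgt) hgt)

theorem isLeast_min_chiStar_floor (hμ : 0 ≤ μ) (hr : (π * r) ^ 4 = a * μ * L ^ 4)
    (h₁ : 1 ≤ ⌊r⌋₊) :
    IsLeast {x | ∃ l : ℕ, 1 ≤ l ∧ x = chiStar a μ L l}
      (min (chiStar a μ L ⌊r⌋₊) (chiStar a μ L (⌊r⌋₊ + 1))) := by
  have hmin := fun l (hl : 1 ≤ l) ↦ min_chiStar_floor_le hμ hr h₁ hl
  rcases min_choice (chiStar a μ L ⌊r⌋₊) (chiStar a μ L (⌊r⌋₊ + 1)) with h | h <;>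
    rw [h] at hmin ⊢
  · exact isLeast_chiStar h₁ hmin
  · exact isLeast_chiStar (by omega) hmin

end CriticalIndex

end ChiStar

theorem stmt_4 (a μ L : ℝ) (ha : 0 < a) (hμ : 0 < μ) (hL : 0 < L) :
    (Nat.floor ((L / π) * (a * μ) ^ ((1 : ℝ) / 4)) = 0 →
      sInf {x : ℝ | ∃ k : ℕ, 1 ≤ k ∧ x = chiStar a μ L k} = chiStar a μ L 1) ∧
    (1 ≤ Nat.floor ((L / π) * (a * μ) ^ ((1 : ℝ) / 4)) →
      ((Nat.floor ((L / π) * (a * μ) ^ ((1 : ℝ) / 4)) : ℝ) = (L / π) * (a * μ) ^ ((1 : ℝ) / 4)) →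
      sInf {x : ℝ | ∃ k : ℕ, 1 ≤ k ∧ x = chiStar a μ L k}
        = chiStar a μ L (Nat.floor ((L / π) * (a * μ) ^ ((1 : ℝ) / 4)))) ∧
    (1 ≤ Nat.floor ((L / π) * (a * μ) ^ ((1 : ℝ) / 4)) →
      ((Nat.floor ((L / π) * (a * μ) ^ ((1 : ℝ) / 4)) : ℝ) ≠ (L / π) * (a * μ) ^ ((1 : ℝ) / 4)) →
      sInf {x : ℝ | ∃ k : ℕ, 1 ≤ k ∧ x = chiStar a μ L k}
        = min (chiStar a μ L (Nat.floor ((L / π) * (a * μ) ^ ((1 : ℝ) / 4))))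
              (chiStar a μ L (Nat.floor ((L / π) * (a * μ) ^ ((1 : ℝ) / 4)) + 1))) ∧
    (∃ k : ℕ, 1 ≤ k ∧
      sInf {x : ℝ | ∃ k' : ℕ, 1 ≤ k' ∧ x = chiStar a μ L k'} = chiStar a μ L k) := by
  set r := (L / π) * (a * μ) ^ ((1 : ℝ) / 4)
  have hr₀ : 0 < r := by positivity
  have hr : (π * r) ^ 4 = a * μ * L ^ 4 :=
    pi_mul_div_pi_mul_rpow_quarter_pow_four (mul_pos ha hμ).le L
  have least_one (h₀ : ⌊r⌋₊ = 0) := isLeast_chiStar_one hμ.le hr₀ (Nat.floor_eq_zero.mp h₀) hr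
  have least_floor (h₁ : 1 ≤ ⌊r⌋₊) := isLeast_min_chiStar_floor hμ.le hr h₁
  refine ⟨fun h₀ ↦ (least_one h₀).csInf_eq, fun h₁ heq ↦ ?_,
    fun h₁ _ ↦ (least_floor h₁).csInf_eq, ?_⟩
  · have hceil : ⌈r⌉₊ ≤ ⌊r⌋₊ := Nat.ceil_le.mpr heq.ge
    have hle : chiStar a μ L ⌊r⌋₊ ≤ chiStar a μ L (⌊r⌋₊ + 1) :=
      chiStar_monotoneOn hμ.le hr₀ hr hceil (hceil.trans (Nat.le_succ _)) (Nat.le_succ _)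
    rw [← min_eq_left hle]
    exact (least_floor h₁).csInf_eq
  · obtain ⟨v, hv⟩ : ∃ v, IsLeast {x | ∃ k : ℕ, 1 ≤ k ∧ x = chiStar a μ L k} v := by
      rcases Nat.eq_zero_or_pos ⌊r⌋₊ with h₀ | h₁
      exacts [⟨_, least_one h₀⟩, ⟨_, least_floor h₁⟩]
    obtain ⟨k, hk, rfl⟩ := hv.1
    exact ⟨k, hk, hv.csInf_eq⟩
end

section
/- Let ((u_n, v_n))_{n≥1} be a sequence of non-constant positive stationary solutions of the chemotaxis system with parameters χ = χ_n, where χ_n → ∞. Suppose u_n'(x) ≤ 0 for all x ∈ (0, L) and all n, liminf_{n→∞} u_n(0) > a/b, limsup_{n→∞} u_n(0) < ∞, and there exist 0 < c < d < L with limsup_{n→∞} max_{x ∈ [c,d]} u_n(x) < a/b. Then u_n → 0 locally uniformly on (0, L), i.e., uniformly on every compact subset of the open interval (0, L). -/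
open Real Set MeasureTheory Filter

/-- `(u, v)` is a positive stationary solution of the parabolic-elliptic chemotaxis system
with singular sensitivity and logistic source on `[0, L]`, with Neumann boundary
conditions. -/
def IsStatSol (χ a b μ ν L : ℝ) (u v : ℝ → ℝ) : Prop :=
  ContDiff ℝ 2 u ∧ ContDiff ℝ 2 v ∧
  (∀ x ∈ Icc (0 : ℝ) L, 0 < u x) ∧ (∀ x ∈ Icc (0 : ℝ) L, 0 < v x) ∧
  (∀ x ∈ Ioo (0 : ℝ) L,
    deriv (deriv u) x - χ * deriv (fun y => u y * deriv v y / v y) x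
      + u x * (a - b * u x) = 0) ∧
  (∀ x ∈ Ioo (0 : ℝ) L, deriv (deriv v) x - μ * v x + ν * u x = 0) ∧
  deriv u 0 = 0 ∧ deriv u L = 0 ∧ deriv v 0 = 0 ∧ deriv v L = 0

/-- `u` is non-constant on `[0, L]`. -/
def NonConst (L : ℝ) (u : ℝ → ℝ) : Prop :=
  ¬ ∃ c : ℝ, ∀ x ∈ Icc (0 : ℝ) L, u x = c


/-!
Since `u` decreases, the flux `J = u' - χ u v' / v = -∫_0^x u (a - b u)` is nonnegative, so `v`
decreases too and `(log u - χ log v)' = J / u` is bounded where `u ≥ ε`. Hence along the `n` with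
`u_n(α) ≥ ε` the drop `v_n(0) - v_n(α)` is `O(1 / χ_n)`, and then `v_n'` is small on `[0, α]`.
Integrating `v'' = μ v - ν u` over windows of width `h` makes `u_n` almost constant, equal to
`μ v_n(0) / ν`, on `[h, α - h]`, and the balance `∫_0^L u (a - b u) = 0` pushes this level up
to about `a / b`. For `α > c` this contradicts the cap at `c`. For `α ≤ c`, integrating the equation
of `v` over `[α, L]` bounds `μ (L - α) v_n(α)` by the mass of `u_n` past `α`, which is small when
`u_n → 0` just right of `α`; so the collapse on `(c, L)` spreads to all of `(0, L)`, and
monotonicity makes it locally uniform.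
-/

open Topology

section RealAnalysis

variable {f : ℝ → ℝ} {p q C : ℝ}

theorem integral_le_sub_mul_of_le (hpq : p ≤ q) (hf : IntervalIntegrable f volume p q)
    (h : ∀ x ∈ Icc p q, f x ≤ C) : ∫ x in p..q, f x ≤ (q - p) * C := by
  simpa using intervalIntegral.integral_mono_on hpq hf intervalIntegrable_const h

theorem sub_mul_le_integral_of_le (hpq : p ≤ q) (hf : IntervalIntegrable f volume p q)
    (h : ∀ x ∈ Icc p q, C ≤ f x) : (q - p) * C ≤ ∫ x in p..q, f x := by
  simpa using intervalIntegral.integral_mono_on hpq intervalIntegrable_const hf h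

/-- The triangle of slope `K` under the graph of `f` ending at `(x, f x)` has area
`f x ^ 2 / (2 * K)` and, as `f p = 0`, lies over `[p, x]`. -/
theorem sq_le_two_mul_integral_of_lipschitz {K : ℝ} (hK : 0 < K)
    (hf : IntervalIntegrable f volume p q) (hnn : ∀ x ∈ Icc p q, 0 ≤ f x) (hp : f p = 0)
    (hlip : ∀ s ∈ Icc p q, ∀ t ∈ Icc p q, |f t - f s| ≤ K * |t - s|)
    {x : ℝ} (hx : x ∈ Icc p q) : f x ^ 2 ≤ 2 * K * ∫ t in p..q, f t := by
  have hpI : p ∈ Icc p q := ⟨le_rfl, hx.1.trans hx.2⟩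
  have hslope : ∀ t ∈ Icc p q, t ≤ x → f x - K * (x - t) ≤ f t := fun t ht htx => by
    have := (abs_le.1 (hlip t ht x hx)).2
    rw [abs_of_nonneg (sub_nonneg.2 htx)] at this
    linarith
  set s := f x / K with hs_def
  have hxs : x - s ≤ x := sub_le_self _ (div_nonneg (hnn x hx) hK.le)
  have hps : p ≤ x - s := by
    have := hslope p hpI hx.1
    rw [hp] at this
    rw [hs_def, le_sub_comm, div_le_iff₀ hK]
    linarith
  have htriangle : ∫ t in (x - s)..x, (f x - K * (x - t)) = f x ^ 2 / (2 * K) := by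
    rw [intervalIntegral.integral_comp_sub_left (fun r => f x - K * r) x, sub_self,
      sub_sub_cancel, intervalIntegral.integral_sub intervalIntegrable_const
        ((continuous_const_mul K).intervalIntegrable _ _),
      intervalIntegral.integral_const_mul, integral_id]
    simp only [intervalIntegral.integral_const, smul_eq_mul, hs_def]
    field_simp
    ring
  have hnn' : 0 ≤ᵐ[volume.restrict (Ioc p q)] f :=
    (ae_restrict_iff' measurableSet_Ioc).2 (.of_forall fun t ht => hnn t (Ioc_subset_Icc_self ht))
  calc f x ^ 2 = 2 * K * (f x ^ 2 / (2 * K)) := by field_simp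
    _ ≤ 2 * K * ∫ t in (x - s)..x, f t := by
        rw [← htriangle]
        gcongr
        exact intervalIntegral.integral_mono_on hxs (by apply Continuous.intervalIntegrable; fun_prop)
          (hf.mono_set (by rw [uIcc_of_le hpI.2, uIcc_of_le hxs]; exact Icc_subset_Icc hps hx.2))
          fun t ht => hslope t ⟨hps.trans ht.1, ht.2.trans hx.2⟩ ht.2
    _ ≤ 2 * K * ∫ t in p..q, f t := by
        gcongr
        exact intervalIntegral.integral_mono_interval hps hxs hx.2 hnn' hf

theorem nonpos_of_forall_integral_nonpos {g : ℝ → ℝ} {L : ℝ} (hL : 0 < L) (hg : Continuous g)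
    (h : ∀ x ∈ Ioc 0 L, ∫ t in 0..x, g t ≤ 0) : g 0 ≤ 0 := by
  by_contra! hpos
  obtain ⟨ρ, hρ, hball⟩ := Metric.eventually_nhds_iff.1 ((hg.tendsto 0).eventually
    (eventually_gt_nhds hpos))
  set r := min (ρ / 2) L
  have hr : 0 < r := lt_min (half_pos hρ) hL
  refine (h r ⟨hr, min_le_right _ _⟩).not_gt <|
    intervalIntegral.intervalIntegral_pos_of_pos_on (hg.intervalIntegrable _ _) (fun t ht => ?_) hr
  refine hball ?_
  rw [Real.dist_eq, sub_zero, abs_of_pos ht.1]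
  exact ht.2.trans_le (min_le_left _ _) |>.trans (half_lt_self hρ)

theorem sub_le_mul_log_div {x y : ℝ} (hx : 0 < x) (hy : 0 < y) : x - y ≤ x * log (x / y) := by
  have := Real.one_sub_inv_le_log_of_pos (div_pos hx hy)
  rw [inv_div] at this
  calc x - y = x * (1 - y / x) := by field_simp
    _ ≤ x * log (x / y) := by gcongr

end RealAnalysis

section AntitoneProfile

variable {u : ℝ → ℝ} {a b L : ℝ}

theorem integral_le_of_antitoneOn (hu : Continuous u) (hanti : AntitoneOn u (Icc 0 L))
    {α β : ℝ} (hα : 0 ≤ α) (hαβ : α ≤ β) (hβL : β ≤ L) :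
    ∫ t in α..L, u t ≤ (β - α) * u α + (L - β) * u β := by
  have hαI : α ∈ Icc 0 L := ⟨hα, hαβ.trans hβL⟩
  have hβI : β ∈ Icc 0 L := ⟨hα.trans hαβ, hβL⟩
  rw [← intervalIntegral.integral_add_adjacent_intervals (hu.intervalIntegrable α β)
    (hu.intervalIntegrable β L)]
  gcongr
  · exact integral_le_sub_mul_of_le hαβ (hu.intervalIntegrable _ _)
      fun t ht => hanti hαI ⟨hα.trans ht.1, ht.2.trans hβL⟩ ht.1
  · exact integral_le_sub_mul_of_le hβL (hu.intervalIntegrable _ _)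
      fun t ht => hanti hβI ⟨hβI.1.trans ht.1, ht.2⟩ ht.1

variable (hb : 0 ≤ b) (hu : Continuous u) (hanti : AntitoneOn u (Icc 0 L))
  (hnn : ∀ x ∈ Icc 0 L, 0 ≤ u x) (hbal : ∫ t in 0..L, u t * (a - b * u t) = 0)
include hb hu hanti hnn hbal

/-- Where `u ≥ a / b` the logistic term is nonpositive and where `u ≤ a / b` it is nonnegative;
for antitone `u` the first region comes first. -/
theorem integral_logistic_nonpos_of_antitoneOn {x : ℝ} (hx : x ∈ Icc 0 L) :
    ∫ t in 0..x, u t * (a - b * u t) ≤ 0 := by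
  have hint : ∀ s t, IntervalIntegrable (fun t => u t * (a - b * u t)) volume s t := fun s t =>
    (hu.mul (continuous_const.sub (continuous_const.mul hu))).intervalIntegrable s t
  by_cases hux : a ≤ b * u x
  · have := integral_le_sub_mul_of_le hx.1 (hint 0 x) fun t ht => by
      have htI : t ∈ Icc 0 L := ⟨ht.1, ht.2.trans hx.2⟩
      exact mul_nonpos_of_nonneg_of_nonpos (hnn t htI)
        (by nlinarith [hanti htI hx ht.2])
    simpa using this
  · have htail : 0 ≤ ∫ t in x..L, u t * (a - b * u t) :=
      intervalIntegral.integral_nonneg hx.2 fun t ht => by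
        have htI : t ∈ Icc 0 L := ⟨hx.1.trans ht.1, ht.2⟩
        exact mul_nonneg (hnn t htI) (by nlinarith [hanti hx htI ht.1])
    linarith [intervalIntegral.integral_add_adjacent_intervals (hint 0 x) (hint x L)]

/-- On `[0, h]` the logistic term is at least `-b u(0)²`, on `[h, α - h]` at least
`u(α - h) (a - b u(h))`, and beyond `α - h` it is nonnegative unless `a ≤ b u(h)`. -/
theorem mul_logistic_le_of_antitoneOn {h α : ℝ} (hh : 0 ≤ h) (hα : 2 * h ≤ α) (hαL : α ≤ L) :
    (α - 2 * h) * u (α - h) * (a - b * u h) ≤ b * u 0 ^ 2 * h := by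
  have h0I : (0 : ℝ) ∈ Icc 0 L := ⟨le_rfl, by linarith⟩
  have hhI : h ∈ Icc 0 L := ⟨hh, by linarith⟩
  have hαhI : α - h ∈ Icc 0 L := ⟨by linarith, by linarith⟩
  have hrhs : 0 ≤ b * u 0 ^ 2 * h := by positivity
  by_cases hah : a ≤ b * u h
  · have : (α - 2 * h) * u (α - h) * (a - b * u h) ≤ 0 :=
      mul_nonpos_of_nonneg_of_nonpos (mul_nonneg (by linarith) (hnn _ hαhI)) (by linarith)
    linarith
  rw [not_le] at hah
  have ha : 0 ≤ a := (mul_nonneg hb (hnn h hhI)).trans hah.le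
  have hint : ∀ s t, IntervalIntegrable (fun t => u t * (a - b * u t)) volume s t := fun s t =>
    (hu.mul (continuous_const.sub (continuous_const.mul hu))).intervalIntegrable s t
  have hhead : h * -(b * u 0 ^ 2) ≤ ∫ t in 0..h, u t * (a - b * u t) := by
    have := sub_mul_le_integral_of_le hh (hint 0 h) fun t ht => by
      have htI : t ∈ Icc 0 L := ⟨ht.1, ht.2.trans hhI.2⟩
      have h1 := hanti h0I htI ht.1
      have h2 := hnn t htI
      show -(b * u 0 ^ 2) ≤ u t * (a - b * u t)
      nlinarith [mul_le_mul h1 h1 h2 (h2.trans h1)]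
    simpa using this
  have hmid : (α - h - h) * (u (α - h) * (a - b * u h)) ≤
      ∫ t in h..(α - h), u t * (a - b * u t) :=
    sub_mul_le_integral_of_le (by linarith) (hint _ _) fun t ht => by
      have htI : t ∈ Icc 0 L := ⟨hh.trans ht.1, ht.2.trans hαhI.2⟩
      have h1 := hanti htI hαhI ht.2
      have h2 := hanti hhI htI ht.1
      calc u (α - h) * (a - b * u h) ≤ u t * (a - b * u h) := by gcongr
        _ ≤ u t * (a - b * u t) := by gcongr; exact hnn t htI
  have htail : 0 ≤ ∫ t in (α - h)..L, u t * (a - b * u t) :=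
    intervalIntegral.integral_nonneg hαhI.2 fun t ht => by
      have htI : t ∈ Icc 0 L := ⟨hαhI.1.trans ht.1, ht.2⟩
      have h1 := (hanti hαhI htI ht.1).trans (hanti hhI hαhI (by linarith))
      exact mul_nonneg (hnn t htI) (by nlinarith)
  have hsplit := intervalIntegral.integral_add_adjacent_intervals (hint 0 h) (hint h (α - h))
  have hsplit' := intervalIntegral.integral_add_adjacent_intervals (hint 0 (α - h)) (hint _ L)
  calc (α - 2 * h) * u (α - h) * (a - b * u h)
      = (α - h - h) * (u (α - h) * (a - b * u h)) := by ring
    _ ≤ b * u 0 ^ 2 * h := by linarith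

end AntitoneProfile

theorem tendstoUniformlyOn_zero_of_antitoneOn {ι : Type*} {l : Filter ι} {f : ι → ℝ → ℝ}
    {s K : Set ℝ} (hanti : ∀ i, AntitoneOn (f i) s) (hnn : ∀ i, ∀ x ∈ s, 0 ≤ f i x)
    (hK : IsCompact K) (hKs : K ⊆ s) (hlim : ∀ x ∈ K, Tendsto (fun i => f i x) l (𝓝 0)) :
    TendstoUniformlyOn f (fun _ => 0) l K := by
  rcases K.eq_empty_or_nonempty with rfl | hne
  · exact tendstoUniformlyOn_empty
  have hmin := hK.sInf_mem hne
  rw [Metric.tendstoUniformlyOn_iff]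
  intro ε hε
  filter_upwards [(hlim _ hmin).eventually_lt_const hε] with i hi x hx
  rw [Real.dist_eq, zero_sub, abs_neg, abs_of_nonneg (hnn i x (hKs hx))]
  exact (hanti i (hKs hmin) (hKs hx) (csInf_le hK.bddBelow hx)).trans_lt hi

theorem tendsto_zero_of_forall_neBot {ι : Type*} {l : Filter ι} {f : ι → ℝ}
    (hf : ∀ᶠ i in l, 0 ≤ f i)
    (h : ∀ ε > 0, ∀ F ≤ l, F.NeBot → (∀ᶠ i in F, ε ≤ f i) → False) : Tendsto f l (𝓝 0) := by
  refine tendsto_order.2 ⟨fun _ hε => hf.mono fun _ hi => hε.trans_le hi, fun ε hε => ?_⟩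
  by_contra hnot
  have hfreq : ∃ᶠ i in l, ε ≤ f i := by simpa [not_eventually, not_lt] using hnot
  exact h ε hε _ inf_le_left (frequently_iff_neBot.1 hfreq) (mem_inf_of_right (mem_principal_self _))

theorem exists_pos_le_mul_lt {A B K : ℝ} (hA : 0 < A) (hB : 0 < B) (hK : 0 ≤ K) :
    ∃ h > 0, h ≤ A ∧ K * h < B := by
  obtain ⟨h, hh, hhB⟩ := exists_pos_mul_lt hB K
  exact ⟨min A h, lt_min hA hh, min_le_left _ _,
    (mul_le_mul_of_nonneg_left (min_le_right _ _) hK).trans_lt hhB⟩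

theorem exists_eventually_le_sub_of_limsup_sSup_lt {ι : Type*} {l : Filter ι} {u : ι → ℝ → ℝ}
    {S : Set ℝ} {M A : ℝ} (hS : IsCompact S) (hu : ∀ i, ContinuousOn (u i) S)
    (hM : ∀ᶠ i in l, ∀ x ∈ S, u i x ≤ M) (h : limsup (fun i => sSup (u i '' S)) l < A) :
    ∃ δ > 0, ∀ᶠ i in l, ∀ x ∈ S, u i x ≤ A - δ := by
  set Λ := limsup (fun i => sSup (u i '' S)) l
  have hbdd : IsBoundedUnder (· ≤ ·) l fun i => sSup (u i '' S) :=
    ⟨max M 0, eventually_map.2 <| hM.mono fun i hi => Real.sSup_le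
      (by rintro _ ⟨x, hx, rfl⟩; exact (hi x hx).trans (le_max_left _ _)) (le_max_right _ _)⟩
  refine ⟨(A - Λ) / 2, by linarith, ?_⟩
  filter_upwards [eventually_lt_of_limsup_lt (show Λ < Λ + (A - Λ) / 2 by linarith) hbdd]
    with i hi x hx
  have := le_csSup (hS.bddAbove_image (hu i)) (mem_image_of_mem _ hx)
  linarith

noncomputable def flux (χ : ℝ) (u v : ℝ → ℝ) (x : ℝ) : ℝ := deriv u x - χ * (u x * deriv v x / v x)

namespace IsStatSol

variable {χ a b μ ν L : ℝ} {u v : ℝ → ℝ} (hs : IsStatSol χ a b μ ν L u v)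
include hs

theorem continuous_u : Continuous u := hs.1.continuous

theorem continuous_v : Continuous v := hs.2.1.continuous

theorem continuous_deriv_u : Continuous (deriv u) := hs.1.continuous_deriv (by norm_num)

theorem continuous_deriv_v : Continuous (deriv v) := hs.2.1.continuous_deriv (by norm_num)

theorem differentiable_u : Differentiable ℝ u := hs.1.differentiable (by norm_num)

theorem differentiable_v : Differentiable ℝ v := hs.2.1.differentiable (by norm_num)

theorem pos_u {x : ℝ} (hx : x ∈ Icc 0 L) : 0 < u x := hs.2.2.1 x hx

theorem pos_v {x : ℝ} (hx : x ∈ Icc 0 L) : 0 < v x := hs.2.2.2.1 x hx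

theorem deriv_u_left : deriv u 0 = 0 := hs.2.2.2.2.2.2.1

theorem deriv_u_right : deriv u L = 0 := hs.2.2.2.2.2.2.2.1

theorem deriv_v_left : deriv v 0 = 0 := hs.2.2.2.2.2.2.2.2.1

theorem deriv_v_right : deriv v L = 0 := hs.2.2.2.2.2.2.2.2.2

theorem hasDerivAt_deriv_v {x : ℝ} (hx : x ∈ Ioo 0 L) :
    HasDerivAt (deriv v) (μ * v x - ν * u x) x := by
  obtain ⟨-, hv, -, -, -, hveq, -⟩ := hs
  have := (hv.differentiable_deriv_two x).hasDerivAt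
  rwa [show deriv (deriv v) x = μ * v x - ν * u x by linarith [hveq x hx]] at this

theorem hasDerivAt_flux {x : ℝ} (hx : x ∈ Ioo 0 L) :
    HasDerivAt (flux χ u v) (-(u x * (a - b * u x))) x := by
  obtain ⟨hu, hv, -, hvpos, hueq, -⟩ := hs
  have hd : DifferentiableAt ℝ (fun y => u y * deriv v y / v y) x :=
    ((hu.differentiable (by norm_num) x).mul (hv.differentiable_deriv_two x)).div
      (hv.differentiable (by norm_num) x) (hvpos x (Ioo_subset_Icc_self hx)).ne'
  have := (hu.differentiable_deriv_two x).hasDerivAt.sub (hd.hasDerivAt.const_mul χ)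
  rwa [show deriv (deriv u) x - χ * deriv (fun y => u y * deriv v y / v y) x
    = -(u x * (a - b * u x)) by linarith [hueq x hx]] at this

theorem continuousOn_flux : ContinuousOn (flux χ u v) (Icc 0 L) :=
  hs.continuous_deriv_u.continuousOn.sub (continuousOn_const.mul
    ((hs.continuous_u.continuousOn.mul hs.continuous_deriv_v.continuousOn).div
      hs.continuous_v.continuousOn fun _ hx => (hs.pos_v hx).ne'))

theorem hasDerivAt_log_sub {x : ℝ} (hx : x ∈ Icc 0 L) :
    HasDerivAt (fun y => log (u y) - χ * log (v y)) (flux χ u v x / u x) x := by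
  have hu := hs.pos_u hx
  have hv := hs.pos_v hx
  rw [show flux χ u v x / u x = deriv u x / u x - χ * (deriv v x / v x) by
    rw [flux]; field_simp]
  exact ((hs.differentiable_u x).hasDerivAt.log hu.ne').sub
    (((hs.differentiable_v x).hasDerivAt.log hv.ne').const_mul χ)

theorem deriv_v_sub {x y : ℝ} (hx : 0 ≤ x) (hxy : x ≤ y) (hy : y ≤ L) :
    deriv v y - deriv v x = ∫ t in x..y, (μ * v t - ν * u t) :=
  (intervalIntegral.integral_eq_sub_of_hasDerivAt_of_le hxy hs.continuous_deriv_v.continuousOn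
    (fun _ ht => hs.hasDerivAt_deriv_v ⟨hx.trans_lt ht.1, ht.2.trans_le hy⟩)
    (((continuous_const.mul hs.continuous_v).sub
      (continuous_const.mul hs.continuous_u)).intervalIntegrable _ _)).symm

theorem mul_integral_u_eq {x y : ℝ} (hx : 0 ≤ x) (hxy : x ≤ y) (hy : y ≤ L) :
    ν * ∫ t in x..y, u t = (μ * ∫ t in x..y, v t) - (deriv v y - deriv v x) := by
  have := hs.deriv_v_sub hx hxy hy
  rw [intervalIntegral.integral_sub ((hs.continuous_v.intervalIntegrable _ _).const_mul μ)
    ((hs.continuous_u.intervalIntegrable _ _).const_mul ν), intervalIntegral.integral_const_mul,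
    intervalIntegral.integral_const_mul] at this
  linarith

theorem flux_eq_neg_integral {x : ℝ} (hx : x ∈ Icc 0 L) :
    flux χ u v x = -∫ t in 0..x, u t * (a - b * u t) := by
  have hFTC := intervalIntegral.integral_eq_sub_of_hasDerivAt_of_le hx.1
    (hs.continuousOn_flux.mono (Icc_subset_Icc_right hx.2))
    (fun _ ht => hs.hasDerivAt_flux ⟨ht.1, ht.2.trans_le hx.2⟩)
    ((hs.continuous_u.mul (continuous_const.sub (continuous_const.mul hs.continuous_u))).neg
      |>.intervalIntegrable _ _)
  have h0 : flux χ u v 0 = 0 := by simp [flux, hs.deriv_u_left, hs.deriv_v_left]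
  rw [intervalIntegral.integral_neg, h0] at hFTC
  linarith

theorem integral_logistic_eq_zero (hL : 0 ≤ L) : ∫ t in 0..L, u t * (a - b * u t) = 0 := by
  have := hs.flux_eq_neg_integral ⟨hL, le_rfl⟩
  simp only [flux, hs.deriv_u_right, hs.deriv_v_right, mul_zero, zero_div, sub_zero] at this
  linarith

theorem antitoneOn_u (hmono : ∀ x ∈ Ioo 0 L, deriv u x ≤ 0) : AntitoneOn u (Icc 0 L) :=
  antitoneOn_of_deriv_nonpos (convex_Icc 0 L) hs.continuous_u.continuousOn
    hs.differentiable_u.differentiableOn (by rwa [interior_Icc])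

end IsStatSol

structure IsDecreasingSol (χ a b μ ν L : ℝ) (u v : ℝ → ℝ) : Prop where
  isStatSol : IsStatSol χ a b μ ν L u v
  deriv_u_nonpos : ∀ x ∈ Ioo 0 L, deriv u x ≤ 0
  χ_pos : 0 < χ
  a_pos : 0 < a
  b_pos : 0 < b
  μ_pos : 0 < μ
  ν_pos : 0 < ν
  L_pos : 0 < L

namespace IsDecreasingSol

variable {χ a b μ ν L : ℝ} {u v : ℝ → ℝ} (hd : IsDecreasingSol χ a b μ ν L u v)
include hd

theorem antitoneOn_u : AntitoneOn u (Icc 0 L) := hd.isStatSol.antitoneOn_u hd.deriv_u_nonpos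

theorem u_le {x : ℝ} (hx : x ∈ Icc 0 L) : u x ≤ u 0 :=
  hd.antitoneOn_u ⟨le_rfl, hd.L_pos.le⟩ hx hx.1

theorem flux_nonneg {x : ℝ} (hx : x ∈ Icc 0 L) : 0 ≤ flux χ u v x := by
  have hs := hd.isStatSol
  rw [hs.flux_eq_neg_integral hx, neg_nonneg]
  exact integral_logistic_nonpos_of_antitoneOn hd.b_pos.le hs.continuous_u hd.antitoneOn_u
    (fun _ hx => (hs.pos_u hx).le) (hs.integral_logistic_eq_zero hd.L_pos.le) hx

theorem deriv_v_nonpos {x : ℝ} (hx : x ∈ Icc 0 L) : deriv v x ≤ 0 := by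
  have hs := hd.isStatSol
  rcases eq_endpoints_or_mem_Ioo_of_mem_Icc hx with rfl | rfl | hx'
  · exact hs.deriv_v_left.le
  · exact hs.deriv_v_right.le
  by_contra! hpos
  have hflux := hd.flux_nonneg hx
  have : 0 < χ * (u x * deriv v x / v x) :=
    mul_pos hd.χ_pos (div_pos (mul_pos (hs.pos_u hx) hpos) (hs.pos_v hx))
  rw [flux] at hflux
  linarith [hd.deriv_u_nonpos x hx']

theorem antitoneOn_v : AntitoneOn v (Icc 0 L) :=
  antitoneOn_of_deriv_nonpos (convex_Icc 0 L) hd.isStatSol.continuous_v.continuousOn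
    hd.isStatSol.differentiable_v.differentiableOn
    (fun _ hx => hd.deriv_v_nonpos (interior_subset hx))

/-- Maximum principle at `0`: since `v'(0) = 0` and `v' ≤ 0` to its right,
`v''(0) = μ v(0) - ν u(0)` cannot be positive. -/
theorem mul_v_le_mul_u {x : ℝ} (hx : x ∈ Icc 0 L) : μ * v x ≤ ν * u 0 := by
  have hs := hd.isStatSol
  have h0 : μ * v 0 - ν * u 0 ≤ 0 :=
    nonpos_of_forall_integral_nonpos (g := fun t => μ * v t - ν * u t) hd.L_pos
      ((continuous_const.mul hs.continuous_v).sub (continuous_const.mul hs.continuous_u))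
      fun y hy => by
        rw [← hs.deriv_v_sub le_rfl hy.1.le hy.2, hs.deriv_v_left, sub_zero]
        exact hd.deriv_v_nonpos ⟨hy.1.le, hy.2⟩
  have := hd.antitoneOn_v ⟨le_rfl, hd.L_pos.le⟩ hx hx.1
  nlinarith [hd.μ_pos]


theorem abs_deriv_v_sub_le {x y : ℝ} (hx : x ∈ Icc 0 L) (hy : y ∈ Icc 0 L) :
    |deriv v y - deriv v x| ≤ ν * u 0 * |y - x| := by
  wlog hxy : x ≤ y generalizing x y
  · rw [abs_sub_comm, abs_sub_comm y]
    exact this hy hx (le_of_not_ge hxy)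
  have hs := hd.isStatSol
  have := intervalIntegral.norm_integral_le_of_norm_le_const
    (f := fun t => μ * v t - ν * u t) (C := ν * u 0) fun t ht => by
      rw [uIoc_of_le hxy] at ht
      have htI : t ∈ Icc 0 L := ⟨hx.1.trans ht.1.le, ht.2.trans hy.2⟩
      have h1 := hd.mul_v_le_mul_u htI
      have h2 := mul_pos hd.μ_pos (hs.pos_v htI)
      have h3 := mul_pos hd.ν_pos (hs.pos_u htI)
      have h4 := mul_le_mul_of_nonneg_left (hd.u_le htI) hd.ν_pos.le
      rw [Real.norm_eq_abs, abs_le]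
      constructor <;> linarith
  rwa [Real.norm_eq_abs, ← hs.deriv_v_sub hx.1 hxy hy.2] at this

theorem neg_deriv_v_le_sqrt {M α x : ℝ} (hM : u 0 ≤ M) (hα : α ∈ Icc 0 L) (hx : x ∈ Icc 0 α) :
    -deriv v x ≤ √(2 * ν * M * (v 0 - v α)) := by
  have hs := hd.isStatSol
  have hsub : Icc 0 α ⊆ Icc 0 L := Icc_subset_Icc_right hα.2
  have hK : 0 < ν * M := mul_pos hd.ν_pos ((hs.pos_u ⟨le_rfl, hd.L_pos.le⟩).trans_le hM)
  have h := sq_le_two_mul_integral_of_lipschitz (f := fun t => -deriv v t) hK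
    (hs.continuous_deriv_v.neg.intervalIntegrable _ _)
    (fun t ht => neg_nonneg.2 (hd.deriv_v_nonpos (hsub ht))) (by simp [hs.deriv_v_left])
    (fun s hs' t ht => by
      rw [neg_sub_neg, abs_sub_comm]
      calc |deriv v t - deriv v s| ≤ ν * u 0 * |t - s| :=
            hd.abs_deriv_v_sub_le (hsub hs') (hsub ht)
        _ ≤ ν * M * |t - s| := by gcongr; exact hd.ν_pos.le)
    hx
  rw [intervalIntegral.integral_neg, intervalIntegral.integral_deriv_eq_sub
    (fun t _ => hs.differentiable_v t) (hs.continuous_deriv_v.intervalIntegrable _ _)] at h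
  exact Real.le_sqrt_of_sq_le (by linarith)

theorem flux_le {M x : ℝ} (hM : u 0 ≤ M) (hx : x ∈ Icc 0 L) : flux χ u v x ≤ x * (b * M ^ 2) := by
  have hs := hd.isStatSol
  rw [hs.flux_eq_neg_integral hx, ← intervalIntegral.integral_neg]
  have := integral_le_sub_mul_of_le hx.1 ((hs.continuous_u.mul (continuous_const.sub
    (continuous_const.mul hs.continuous_u))).neg.intervalIntegrable 0 x) fun t ht => by
      have htI : t ∈ Icc 0 L := ⟨ht.1, ht.2.trans hx.2⟩
      have h1 := hs.pos_u htI
      have h2 := (hd.u_le htI).trans hM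
      show -(u t * (a - b * u t)) ≤ b * M ^ 2
      nlinarith [hd.a_pos, hd.b_pos, mul_le_mul h2 h2 h1.le (h1.le.trans h2)]
  simpa using this

/-- On `[0, α]` the derivative `flux / u` of `log u - χ log v` is at most `L b M² / ε`. -/
theorem mul_log_div_le {M α ε : ℝ} (hM : u 0 ≤ M) (hα : α ∈ Icc 0 L) (hε : 0 < ε)
    (huα : ε ≤ u α) : χ * log (v 0 / v α) ≤ log (M / ε) + L ^ 2 * b * M ^ 2 / ε := by
  have hs := hd.isStatSol
  have hsub : Icc 0 α ⊆ Icc 0 L := Icc_subset_Icc_right hα.2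
  have h0 : (0 : ℝ) ∈ Icc 0 L := ⟨le_rfl, hd.L_pos.le⟩
  have hderiv : ∀ t ∈ uIcc 0 α,
      HasDerivAt (fun y => log (u y) - χ * log (v y)) (flux χ u v t / u t) t := fun t ht =>
    hs.hasDerivAt_log_sub (hsub (by rwa [uIcc_of_le hα.1] at ht))
  have hcont : ContinuousOn (fun t => flux χ u v t / u t) (uIcc 0 α) := by
    rw [uIcc_of_le hα.1]
    exact (hs.continuousOn_flux.mono hsub).div hs.continuous_u.continuousOn
      fun t ht => (hs.pos_u (hsub ht)).ne'
  have hbM : 0 ≤ b * M ^ 2 := mul_nonneg hd.b_pos.le (sq_nonneg M)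
  have hbound := integral_le_sub_mul_of_le (C := L * (b * M ^ 2) / ε) hα.1
    hcont.intervalIntegrable fun t ht => by
      have hεt : ε ≤ u t := huα.trans (hd.antitoneOn_u (hsub ht) hα ht.2)
      calc flux χ u v t / u t ≤ flux χ u v t / ε :=
            div_le_div_of_nonneg_left (hd.flux_nonneg (hsub ht)) hε hεt
        _ ≤ L * (b * M ^ 2) / ε := by
            gcongr
            exact (hd.flux_le hM (hsub ht)).trans
              (mul_le_mul_of_nonneg_right (ht.2.trans hα.2) hbM)
  rw [intervalIntegral.integral_eq_sub_of_hasDerivAt hderiv hcont.intervalIntegrable] at hbound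
  have hu0 := hs.pos_u h0
  rw [log_div (hs.pos_v h0).ne' (hs.pos_v hα).ne', log_div (hu0.trans_le hM).ne' hε.ne']
  have h1 : log (u 0) ≤ log M := log_le_log hu0 hM
  have h2 : log ε ≤ log (u α) := log_le_log hε huα
  have h3 : (α - 0) * (L * (b * M ^ 2) / ε) ≤ L ^ 2 * b * M ^ 2 / ε := by
    rw [sub_zero, mul_div_assoc', div_le_div_iff_of_pos_right hε]
    nlinarith [mul_le_mul_of_nonneg_right hα.2 (mul_nonneg hd.L_pos.le hbM)]
  linarith

theorem v_sub_le_div {M α ε : ℝ} (hM : u 0 ≤ M) (hα : α ∈ Icc 0 L) (hε : 0 < ε)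
    (huα : ε ≤ u α) : v 0 - v α ≤ ν * M / μ * (log (M / ε) + L ^ 2 * b * M ^ 2 / ε) / χ := by
  have hs := hd.isStatSol
  have h0 : (0 : ℝ) ∈ Icc 0 L := ⟨le_rfl, hd.L_pos.le⟩
  have hv0 := hs.pos_v h0
  have hvα := hs.pos_v hα
  have hlog : 0 ≤ log (v 0 / v α) :=
    log_nonneg ((one_le_div hvα).2 (hd.antitoneOn_v h0 hα hα.1))
  have hv0M : v 0 ≤ ν * M / μ := by
    rw [le_div_iff₀ hd.μ_pos]
    nlinarith [hd.mul_v_le_mul_u h0, hd.ν_pos]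
  have hlogχ : log (v 0 / v α) ≤ (log (M / ε) + L ^ 2 * b * M ^ 2 / ε) / χ := by
    rw [le_div_iff₀ hd.χ_pos, mul_comm]
    exact hd.mul_log_div_le hM hα hε huα
  calc v 0 - v α ≤ v 0 * log (v 0 / v α) := sub_le_mul_log_div hv0 hvα
    _ ≤ ν * M / μ * ((log (M / ε) + L ^ 2 * b * M ^ 2 / ε) / χ) :=
        mul_le_mul hv0M hlogχ hlog (hv0.le.trans hv0M)
    _ = _ := by ring

theorem mul_u_le_of_window {h x θ : ℝ} (hh : 0 ≤ h) (hhx : h ≤ x) (hxL : x ≤ L)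
    (hθ : -deriv v x ≤ θ) : ν * h * u x ≤ μ * h * v 0 + θ := by
  have hs := hd.isStatSol
  have hxhI : x - h ∈ Icc 0 L := ⟨by linarith, by linarith⟩
  have hxI : x ∈ Icc 0 L := ⟨hh.trans hhx, hxL⟩
  have hmass := hs.mul_integral_u_eq hxhI.1 (sub_le_self x hh) hxL
  have hu : h * u x ≤ ∫ t in (x - h)..x, u t := by
    simpa using sub_mul_le_integral_of_le (sub_le_self x hh)
      (hs.continuous_u.intervalIntegrable _ _) fun t ht =>
        hd.antitoneOn_u ⟨hxhI.1.trans ht.1, ht.2.trans hxL⟩ hxI ht.2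
  have hv : ∫ t in (x - h)..x, v t ≤ h * v 0 := by
    simpa using integral_le_sub_mul_of_le (sub_le_self x hh)
      (hs.continuous_v.intervalIntegrable _ _) fun t ht =>
        hd.antitoneOn_v ⟨le_rfl, hd.L_pos.le⟩ ⟨hxhI.1.trans ht.1, ht.2.trans hxL⟩
          (hxhI.1.trans ht.1)
  nlinarith [mul_le_mul_of_nonneg_left hu hd.ν_pos.le, mul_le_mul_of_nonneg_left hv hd.μ_pos.le,
    hd.deriv_v_nonpos hxhI]

theorem mul_v_sub_le_mul_u_of_window {h x α θ : ℝ} (hh : 0 ≤ h) (hx : 0 ≤ x) (hxα : x + h ≤ α)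
    (hαL : α ≤ L) (hθ : -deriv v x ≤ θ) : μ * h * v α - θ ≤ ν * h * u x := by
  have hs := hd.isStatSol
  have hxI : x ∈ Icc 0 L := ⟨hx, by linarith⟩
  have hxhI : x + h ∈ Icc 0 L := ⟨by linarith, by linarith⟩
  have hmass := hs.mul_integral_u_eq hx (le_add_of_nonneg_right hh) hxhI.2
  have hu : ∫ t in x..(x + h), u t ≤ h * u x := by
    simpa using integral_le_sub_mul_of_le (le_add_of_nonneg_right hh)
      (hs.continuous_u.intervalIntegrable _ _) fun t ht =>
        hd.antitoneOn_u hxI ⟨hx.trans ht.1, ht.2.trans hxhI.2⟩ ht.1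
  have hv : h * v α ≤ ∫ t in x..(x + h), v t := by
    simpa using sub_mul_le_integral_of_le (le_add_of_nonneg_right hh)
      (hs.continuous_v.intervalIntegrable _ _) fun t ht =>
        hd.antitoneOn_v ⟨hx.trans ht.1, by linarith [ht.2]⟩ ⟨hx.trans (by linarith), hαL⟩
          (ht.2.trans hxα)
  nlinarith [mul_le_mul_of_nonneg_left hu hd.ν_pos.le, mul_le_mul_of_nonneg_left hv hd.μ_pos.le,
    hd.deriv_v_nonpos hxhI]

theorem mul_logistic_le {h α : ℝ} (hh : 0 ≤ h) (hα : 2 * h ≤ α) (hαL : α ≤ L) :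
    (α - 2 * h) * u (α - h) * (a - b * u h) ≤ b * u 0 ^ 2 * h :=
  mul_logistic_le_of_antitoneOn hd.b_pos.le hd.isStatSol.continuous_u hd.antitoneOn_u
    (fun _ hx => (hd.isStatSol.pos_u hx).le)
    (hd.isStatSol.integral_logistic_eq_zero hd.L_pos.le) hh hα hαL

/-- Past `α` the slope `-v'` stays below `w := -v'(α) + ν ∫_α^L u`, while integrating the
equation of `v` over `[α, L]` gives `μ ∫_α^L v = w`. -/
theorem mul_v_le_of_tail {α : ℝ} (hα : α ∈ Icc 0 L) :
    μ * (L - α) * v α ≤ (1 + μ * (L - α) ^ 2) * (-deriv v α + ν * ∫ t in α..L, u t) := by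
  have hs := hd.isStatSol
  set w := -deriv v α + ν * ∫ t in α..L, u t
  have hI : ∀ {t}, t ∈ Icc α L → t ∈ Icc 0 L := fun ht => ⟨hα.1.trans ht.1, ht.2⟩
  have hslope : ∀ x ∈ Icc α L, -deriv v x ≤ w := fun x hx => by
    have hmass := hs.mul_integral_u_eq hα.1 hx.1 hx.2
    have hu : ∫ t in α..x, u t ≤ ∫ t in α..L, u t :=
      intervalIntegral.integral_mono_interval le_rfl hx.1 hx.2
        ((ae_restrict_iff' measurableSet_Ioc).2 (.of_forall fun t ht =>
          (hs.pos_u (hI (Ioc_subset_Icc_self ht))).le))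
        (hs.continuous_u.intervalIntegrable _ _)
    have hv : 0 ≤ ∫ t in α..x, v t := intervalIntegral.integral_nonneg hx.1 fun t ht =>
      (hs.pos_v (hI ⟨ht.1, ht.2.trans hx.2⟩)).le
    nlinarith [mul_le_mul_of_nonneg_left hu hd.ν_pos.le, mul_nonneg hd.μ_pos.le hv]
  have hdrop : v α - v L ≤ (L - α) * w := by
    have := integral_le_sub_mul_of_le (f := fun t => -deriv v t) hα.2
      (hs.continuous_deriv_v.neg.intervalIntegrable _ _) hslope
    rw [intervalIntegral.integral_neg, intervalIntegral.integral_deriv_eq_sub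
      (fun t _ => hs.differentiable_v t) (hs.continuous_deriv_v.intervalIntegrable _ _)] at this
    linarith
  have hmass : μ * ∫ t in α..L, v t = w := by
    have := hs.mul_integral_u_eq hα.1 hα.2 le_rfl
    rw [hs.deriv_v_right] at this
    linarith
  have hvL : (L - α) * v L ≤ ∫ t in α..L, v t :=
    sub_mul_le_integral_of_le hα.2 (hs.continuous_v.intervalIntegrable _ _) fun t ht =>
      hd.antitoneOn_v (hI ht) ⟨hd.L_pos.le, le_rfl⟩ ht.2
  have hLα : 0 ≤ μ * (L - α) := mul_nonneg hd.μ_pos.le (sub_nonneg.2 hα.2)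
  calc μ * (L - α) * v α ≤ μ * (L - α) * (v L + (L - α) * w) := by gcongr; linarith
    _ = μ * ((L - α) * v L) + μ * (L - α) ^ 2 * w := by ring
    _ ≤ (μ * ∫ t in α..L, v t) + μ * (L - α) ^ 2 * w := by gcongr; exact hd.μ_pos.le
    _ = (1 + μ * (L - α) ^ 2) * w := by rw [hmass]; ring

/-- When `v` is nearly flat on `[0, α]`, `u` is nearly constant on `[h, α - h]`; a cap
`u(c) ≤ a / b - δ` with `c ≤ α - 2h` keeps the logistic term positive there, which
`mul_logistic_le` allows only for `h` not too small. -/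
theorem mul_le_of_cap {M c h α ε δ : ℝ} (hM : u 0 ≤ M) (hc : 0 ≤ c) (hh : 0 < h)
    (hch : c ≤ α - 2 * h) (hαL : α ≤ L) (hε : 0 < ε) (huα : ε ≤ u α) (hδ : 0 < δ)
    (hcap : u c ≤ a / b - δ)
    (hflat : μ * h * (v 0 - v α) + 2 * √(2 * ν * M * (v 0 - v α)) < ν * h * (δ / 2)) :
    c * ε * δ ≤ 2 * M ^ 2 * h := by
  have hs := hd.isStatSol
  have hαI : α ∈ Icc 0 L := ⟨by linarith, hαL⟩
  have hαhI : α - h ∈ Icc 0 L := ⟨by linarith, by linarith⟩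
  have hup := hd.mul_u_le_of_window hh.le le_rfl (by linarith)
    (hd.neg_deriv_v_le_sqrt hM hαI ⟨hh.le, by linarith⟩)
  have hlo := hd.mul_v_sub_le_mul_u_of_window hh.le hαhI.1 (by linarith) hαL
    (hd.neg_deriv_v_le_sqrt hM hαI ⟨hαhI.1, by linarith⟩)
  have hosc : u h < u (α - h) + δ / 2 := by
    have : ν * h * (u h - u (α - h)) < ν * h * (δ / 2) := by linarith
    linarith [lt_of_mul_lt_mul_left this (mul_pos hd.ν_pos hh).le]
  have hgap : b * (δ / 2) ≤ a - b * u h := by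
    have hcapαh := (hd.antitoneOn_u ⟨hc, by linarith⟩ hαhI (by linarith)).trans hcap
    have : b * u h ≤ b * (a / b - δ / 2) := by gcongr; exact hd.b_pos.le; linarith
    rwa [mul_sub, mul_div_cancel₀ _ hd.b_pos.ne', le_sub_comm] at this
  have hεαh : ε ≤ u (α - h) := huα.trans (hd.antitoneOn_u hαhI hαI (by linarith))
  have hu0 : u 0 ^ 2 ≤ M ^ 2 :=
    pow_le_pow_left₀ (hs.pos_u ⟨le_rfl, hd.L_pos.le⟩).le hM 2
  have key : b * (c * ε * δ) ≤ b * (2 * M ^ 2 * h) := by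
    have hb := hd.b_pos
    calc b * (c * ε * δ) = c * ε * (b * (δ / 2)) * 2 := by ring
      _ ≤ (α - 2 * h) * u (α - h) * (a - b * u h) * 2 := by
          gcongr ?_ * 2
          exact mul_le_mul (mul_le_mul hch hεαh hε.le (hc.trans hch)) hgap (by positivity)
            (mul_nonneg (hc.trans hch) (hε.le.trans hεαh))
      _ ≤ b * u 0 ^ 2 * h * 2 :=
          mul_le_mul_of_nonneg_right (hd.mul_logistic_le hh.le (by linarith) hαL) (by norm_num)
      _ ≤ b * (2 * M ^ 2 * h) := by nlinarith [mul_le_mul_of_nonneg_left hu0 (mul_nonneg hb.le hh.le)]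
  exact le_of_mul_le_mul_left key hd.b_pos

/-- When `v` is nearly flat on `[0, α]` and `u(α) ≥ ε`, the balance of the logistic term
forces `u(h) ≥ 3a / (4b)`, and the window estimate transfers this to `v(α)`. -/
theorem lt_mul_v_of_flat {M h α ε : ℝ} (hM : u 0 ≤ M) (hh : 0 < h) (h4h : 4 * h ≤ α)
    (hαL : α ≤ L) (hε : 0 < ε) (huα : ε ≤ u α) (hhε : 8 * b * M ^ 2 * h ≤ a * α * ε)
    (hflat : μ * h * (v 0 - v α) + √(2 * ν * M * (v 0 - v α)) < ν * h * (a / (4 * b))) :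
    ν * (a / (2 * b)) < μ * v α := by
  have hs := hd.isStatSol
  have ha := hd.a_pos
  have hb := hd.b_pos
  have hαI : α ∈ Icc 0 L := ⟨by linarith, hαL⟩
  have hαhI : α - h ∈ Icc 0 L := ⟨by linarith, by linarith⟩
  have hup := hd.mul_u_le_of_window hh.le le_rfl (by linarith)
    (hd.neg_deriv_v_le_sqrt hM hαI ⟨hh.le, by linarith⟩)
  have hεαh : ε ≤ u (α - h) := huα.trans (hd.antitoneOn_u hαhI hαI (by linarith))
  have hquarter : 3 * a ≤ 4 * (b * u h) := by
    by_contra! hlt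
    have hbal := hd.mul_logistic_le hh.le (by linarith) hαL
    have hu0 : b * u 0 ^ 2 * h ≤ b * M ^ 2 * h := by
      gcongr
      exact (hs.pos_u ⟨le_rfl, hd.L_pos.le⟩).le
    have : α / 2 * ε * (a / 4) < (α - 2 * h) * u (α - h) * (a - b * u h) :=
      calc α / 2 * ε * (a / 4) < α / 2 * ε * (a - b * u h) :=
            mul_lt_mul_of_pos_left (by linarith) (by nlinarith)
        _ ≤ (α - 2 * h) * u (α - h) * (a - b * u h) :=
            mul_le_mul_of_nonneg_right (mul_le_mul (by linarith) hεαh hε.le (by linarith))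
              (by linarith)
    linarith
  have hνh : 0 ≤ ν * h := (mul_pos hd.ν_pos hh).le
  have h1 : ν * h * (a / (2 * b)) + ν * h * (a / (4 * b)) ≤ ν * h * u h := by
    have : a / (2 * b) + a / (4 * b) ≤ u h := by
      rw [div_add_div _ _ (by positivity) (by positivity), div_le_iff₀ (by positivity)]
      nlinarith
    nlinarith
  have : h * (ν * (a / (2 * b))) < h * (μ * v α) := by linarith
  exact lt_of_mul_lt_mul_left this hh.le

theorem sub_mul_mul_v_le {M α ᾱ : ℝ} (hM : u 0 ≤ M) (hα : 0 ≤ α) (hαᾱ : α ≤ ᾱ) (hᾱL : ᾱ ≤ L) :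
    (L - α) * (μ * v α) ≤
      (1 + μ * L ^ 2) * (√(2 * ν * M * (v 0 - v α)) + ν * ((ᾱ - α) * M + L * u ᾱ)) := by
  have hs := hd.isStatSol
  have hμ := hd.μ_pos
  have hαI : α ∈ Icc 0 L := ⟨hα, hαᾱ.trans hᾱL⟩
  have hw0 : 0 ≤ -deriv v α + ν * ∫ t in α..L, u t := by
    have : 0 ≤ ∫ t in α..L, u t := intervalIntegral.integral_nonneg hαI.2
      fun t ht => (hs.pos_u ⟨hα.trans ht.1, ht.2⟩).le
    nlinarith [hd.deriv_v_nonpos hαI, hd.ν_pos]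
  have hw : -deriv v α + ν * ∫ t in α..L, u t ≤
      √(2 * ν * M * (v 0 - v α)) + ν * ((ᾱ - α) * M + L * u ᾱ) := by
    have hmass := integral_le_of_antitoneOn hs.continuous_u hd.antitoneOn_u hα hαᾱ hᾱL
    have : ∫ t in α..L, u t ≤ (ᾱ - α) * M + L * u ᾱ := by
      linarith [mul_le_mul_of_nonneg_left ((hd.u_le hαI).trans hM) (sub_nonneg.2 hαᾱ),
        mul_nonneg (hα.trans hαᾱ) (hs.pos_u ⟨hα.trans hαᾱ, hᾱL⟩).le]
    linarith [mul_le_mul_of_nonneg_left this hd.ν_pos.le,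
      hd.neg_deriv_v_le_sqrt hM hαI ⟨hα, le_rfl⟩]
  have hK : 1 + μ * (L - α) ^ 2 ≤ 1 + μ * L ^ 2 := by
    have := pow_le_pow_left₀ (sub_nonneg.2 hαI.2) (sub_le_self L hα) 2
    linarith [mul_le_mul_of_nonneg_left this hμ.le]
  calc (L - α) * (μ * v α) = μ * (L - α) * v α := by ring
    _ ≤ _ := hd.mul_v_le_of_tail hαI
    _ ≤ _ := mul_le_mul hK hw hw0 (by positivity)

end IsDecreasingSol

section Sequence

variable {a b μ ν L M : ℝ} {χ : ℕ → ℝ} {u v : ℕ → ℝ → ℝ} {F : Filter ℕ}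

theorem tendsto_v_zero_sub_v (hD : ∀ᶠ n in atTop, IsDecreasingSol (χ n) a b μ ν L (u n) (v n))
    (hχ : Tendsto χ atTop atTop) (hM : ∀ᶠ n in atTop, u n 0 ≤ M) (hF : F ≤ atTop) {α ε : ℝ}
    (hα : α ∈ Icc 0 L) (hε : 0 < ε) (huα : ∀ᶠ n in F, ε ≤ u n α) :
    Tendsto (fun n => v n 0 - v n α) F (𝓝 0) := by
  refine tendsto_of_tendsto_of_tendsto_of_le_of_le' tendsto_const_nhds
    (tendsto_const_nhds.div_atTop (hχ.mono_left hF)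
      (a := ν * M / μ * (log (M / ε) + L ^ 2 * b * M ^ 2 / ε))) ?_ ?_
  · filter_upwards [hD.filter_mono hF] with n hn
    exact sub_nonneg.2 (hn.antitoneOn_v ⟨le_rfl, hn.L_pos.le⟩ hα hα.1)
  · filter_upwards [hD.filter_mono hF, hM.filter_mono hF, huα] with n hn hMn hεn
    exact hn.v_sub_le_div hMn hα hε hεn

theorem tendsto_u_of_cap (hD : ∀ᶠ n in atTop, IsDecreasingSol (χ n) a b μ ν L (u n) (v n))
    (hχ : Tendsto χ atTop atTop) (hM : ∀ᶠ n in atTop, u n 0 ≤ M) {c δ : ℝ} (hc : 0 < c)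
    (hδ : 0 < δ) (hcap : ∀ᶠ n in atTop, u n c ≤ a / b - δ) {α : ℝ} (hα : α ∈ Ioo c L) :
    Tendsto (fun n => u n α) atTop (𝓝 0) := by
  have hαI : α ∈ Icc 0 L := ⟨hc.le.trans hα.1.le, hα.2.le⟩
  refine tendsto_zero_of_forall_neBot (hD.mono fun n hn => (hn.isStatSol.pos_u hαI).le)
    fun ε hε F hF hne huα => ?_
  obtain ⟨_, hD₀, -⟩ := (hD.and hM).exists
  have hν := hD₀.ν_pos
  obtain ⟨h, hh, hhα, hhM⟩ :=
    exists_pos_le_mul_lt (by linarith [hα.1] : 0 < (α - c) / 2)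
      (by positivity : 0 < c * ε * δ / 2) (sq_nonneg M)
  have hρ := tendsto_v_zero_sub_v hD hχ hM hF hαI hε huα
  have hflat : Tendsto (fun n => μ * h * (v n 0 - v n α) + 2 * √(2 * ν * M * (v n 0 - v n α)))
      F (𝓝 0) := by
    simpa using (hρ.const_mul (μ * h)).add ((hρ.const_mul (2 * ν * M)).sqrt.const_mul 2)
  obtain ⟨n, ⟨⟨hn, hMn⟩, hcapn⟩, hεn, hflatn⟩ := (((hD.and hM).and hcap).filter_mono hF |>.and
    (huα.and (hflat.eventually_lt_const (by positivity : 0 < ν * h * (δ / 2))))).exists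
  have := hn.mul_le_of_cap hMn hc.le hh (by linarith) hα.2.le hε hεn hδ hcapn hflatn
  linarith

theorem tendsto_u_of_tendsto_u_of_close
    (hD : ∀ᶠ n in atTop, IsDecreasingSol (χ n) a b μ ν L (u n) (v n))
    (hχ : Tendsto χ atTop atTop) (hM : ∀ᶠ n in atTop, u n 0 ≤ M) {c α ᾱ : ℝ} (hcL : c < L)
    (hα : α ∈ Ioc 0 c) (hαᾱ : α ≤ ᾱ) (hᾱL : ᾱ ≤ L)
    (hclose : (1 + μ * L ^ 2) * M * (ᾱ - α) < (L - c) * (a / (4 * b)))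
    (hᾱ : Tendsto (fun n => u n ᾱ) atTop (𝓝 0)) : Tendsto (fun n => u n α) atTop (𝓝 0) := by
  have hαI : α ∈ Icc 0 L := ⟨hα.1.le, hαᾱ.trans hᾱL⟩
  have hα0 : 0 < α := hα.1
  refine tendsto_zero_of_forall_neBot (hD.mono fun n hn => (hn.isStatSol.pos_u hαI).le)
    fun ε hε F hF hne huα => ?_
  obtain ⟨_, hD₀, -⟩ := (hD.and hM).exists
  have ha := hD₀.a_pos
  have hb := hD₀.b_pos
  have hν := hD₀.ν_pos
  obtain ⟨h, hh, hhα, hhM⟩ :=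
    exists_pos_le_mul_lt (by positivity : 0 < α / 4) (by positivity : 0 < a * α * ε)
      (by positivity : 0 ≤ 8 * b * M ^ 2)
  have hρ := tendsto_v_zero_sub_v hD hχ hM hF hαI hε huα
  have hθ := (hρ.const_mul (2 * ν * M)).sqrt
  rw [mul_zero, Real.sqrt_zero] at hθ
  have hflat : Tendsto (fun n => μ * h * (v n 0 - v n α) + √(2 * ν * M * (v n 0 - v n α)))
      F (𝓝 0) := by
    simpa using (hρ.const_mul (μ * h)).add hθ
  have htail : Tendsto (fun n => (1 + μ * L ^ 2) *
      (√(2 * ν * M * (v n 0 - v n α)) + ν * L * u n ᾱ)) F (𝓝 0) := by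
    simpa using (hθ.add ((hᾱ.mono_left hF).const_mul (ν * L))).const_mul (1 + μ * L ^ 2)
  obtain ⟨n, ⟨hn, hMn⟩, hεn, hflatn, htailn⟩ := ((hD.and hM).filter_mono hF |>.and
    (huα.and ((hflat.eventually_lt_const (by positivity : 0 < ν * h * (a / (4 * b)))).and
      (htail.eventually_lt_const
        (mul_pos (sub_pos.2 hcL) (by positivity : 0 < ν * (a / (4 * b)))))))).exists
  have hlow := hn.lt_mul_v_of_flat hMn hh (by linarith) hαI.2 hε hεn hhM.le hflatn
  have hupp := hn.sub_mul_mul_v_le hMn hα.1.le hαᾱ hᾱL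
  have : (L - c) * (ν * (a / (2 * b))) ≤ (L - α) * (μ * v n α) :=
    mul_le_mul (by linarith [hα.2]) hlow.le (by positivity) (by linarith)
  have : (L - c) * (ν * (a / (2 * b))) = 2 * ((L - c) * (ν * (a / (4 * b)))) := by
    field_simp
    ring
  nlinarith [mul_lt_mul_of_pos_left hclose hν]

/-- Otherwise the points of `(0, L)` where `u n` does not tend to `0` have a supremum `s ≤ c`,
with such a point just left of `s` and a point where `u n → 0` just right of it. -/
theorem tendsto_u_of_tendsto_u_right
    (hD : ∀ᶠ n in atTop, IsDecreasingSol (χ n) a b μ ν L (u n) (v n))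
    (hχ : Tendsto χ atTop atTop) (hM : ∀ᶠ n in atTop, u n 0 ≤ M) {c : ℝ} (hcL : c < L)
    (hright : ∀ x ∈ Ioo c L, Tendsto (fun n => u n x) atTop (𝓝 0)) {α : ℝ} (hα : α ∈ Ioo 0 L) :
    Tendsto (fun n => u n α) atTop (𝓝 0) := by
  by_contra hbad
  set N := {x ∈ Ioo 0 L | ¬Tendsto (fun n => u n x) atTop (𝓝 0)}
  have hNc : ∀ x ∈ N, x ≤ c := fun x hx => not_lt.1 fun hcx => hx.2 (hright x ⟨hcx, hx.1.2⟩)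
  have hαN : α ∈ N := ⟨hα, hbad⟩
  have hαs : α ≤ sSup N := le_csSup ⟨c, hNc⟩ hαN
  have hsc : sSup N ≤ c := csSup_le ⟨α, hαN⟩ hNc
  obtain ⟨_, hD₀, hM₀⟩ := (hD.and hM).exists
  have ha := hD₀.a_pos
  have hb := hD₀.b_pos
  have hμ := hD₀.μ_pos
  have hM0 : 0 ≤ M := (hD₀.isStatSol.pos_u ⟨le_rfl, hD₀.L_pos.le⟩).le.trans hM₀
  obtain ⟨γ, hγ, hγL, hγclose⟩ := exists_pos_le_mul_lt (sub_pos.2 hcL)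
    (mul_pos (sub_pos.2 hcL) (by positivity : 0 < a / (4 * b)))
    (by positivity : 0 ≤ (1 + μ * L ^ 2) * M)
  obtain ⟨β, hβN, hβ⟩ := exists_lt_of_lt_csSup ⟨α, hαN⟩ (show sSup N - γ / 2 < sSup N by linarith)
  have hᾱ : Tendsto (fun n => u n (sSup N + γ / 2)) atTop (𝓝 0) := by
    by_contra hbad'
    have := le_csSup ⟨c, hNc⟩
      (⟨⟨by linarith [hα.1], by linarith⟩, hbad'⟩ : sSup N + γ / 2 ∈ N)
    linarith
  refine hβN.2 (tendsto_u_of_tendsto_u_of_close hD hχ hM hcL ⟨hβN.1.1, hNc β hβN⟩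
    (by linarith [le_csSup ⟨c, hNc⟩ hβN]) (by linarith) ?_ hᾱ)
  calc (1 + μ * L ^ 2) * M * (sSup N + γ / 2 - β) ≤ (1 + μ * L ^ 2) * M * γ := by
        gcongr
        linarith
    _ < _ := hγclose

end Sequence
theorem stmt_17_general (a b μ ν L : ℝ) (ha : 0 < a) (hb : 0 < b)
    (hμ : 0 < μ) (hν : 0 < ν) (hL : 0 < L)
    (χ : ℕ → ℝ) (hχ : Tendsto χ atTop atTop)
    (u v : ℕ → ℝ → ℝ)
    (hsol : ∀ n, IsStatSol (χ n) a b μ ν L (u n) (v n))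
    (hmono : ∀ n, ∀ x ∈ Ioo (0 : ℝ) L, deriv (u n) x ≤ 0)
    (hbdd : Filter.IsBoundedUnder (· ≤ ·) atTop (fun n => u n 0))
    (c d : ℝ) (hc : 0 < c) (hcd : c < d) (hdL : d < L)
    (hsmall : Filter.limsup (fun n => sSup (u n '' Icc c d)) atTop < a / b) :
    ∀ K : Set ℝ, IsCompact K → K ⊆ Ioo (0 : ℝ) L →
      TendstoUniformlyOn (fun n => u n) (fun _ => (0 : ℝ)) atTop K := by
  have hD : ∀ᶠ n in atTop, IsDecreasingSol (χ n) a b μ ν L (u n) (v n) :=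
    (hχ.eventually_gt_atTop 0).mono fun n hn => ⟨hsol n, hmono n, hn, ha, hb, hμ, hν, hL⟩
  have hanti n := (hsol n).antitoneOn_u (hmono n)
  obtain ⟨M, hM⟩ : ∃ M, ∀ᶠ n in atTop, u n 0 ≤ M := hbdd
  have hcdI : Icc c d ⊆ Icc 0 L := Icc_subset_Icc hc.le hdL.le
  obtain ⟨δ, hδ, hcap⟩ := exists_eventually_le_sub_of_limsup_sSup_lt isCompact_Icc
    (fun n => (hsol n).continuous_u.continuousOn)
    (hM.mono fun n hn x hx => (hanti n ⟨le_rfl, hL.le⟩ (hcdI hx) (hcdI hx).1).trans hn) hsmall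
  have hright : ∀ x ∈ Ioo c L, Tendsto (fun n => u n x) atTop (𝓝 0) := fun x hx =>
    tendsto_u_of_cap hD hχ hM hc hδ (hcap.mono fun n hn => hn c ⟨le_rfl, hcd.le⟩) hx
  intro K hK hKs
  exact tendstoUniformlyOn_zero_of_antitoneOn hanti (fun n x hx => ((hsol n).pos_u hx).le) hK
    (hKs.trans Ioo_subset_Icc_self) fun x hx =>
      tendsto_u_of_tendsto_u_right hD hχ hM (hcd.trans hdL) hright (hKs hx)

theorem stmt_17 (a b μ ν L : ℝ) (ha : 0 < a) (hb : 0 < b)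
    (hμ : 0 < μ) (hν : 0 < ν) (hL : 0 < L)
    (χ : ℕ → ℝ) (hχpos : ∀ n, 0 < χ n) (hχ : Tendsto χ atTop atTop)
    (u v : ℕ → ℝ → ℝ)
    (hsol : ∀ n, IsStatSol (χ n) a b μ ν L (u n) (v n))
    (hnc : ∀ n, NonConst L (u n))
    (hmono : ∀ n, ∀ x ∈ Ioo (0 : ℝ) L, deriv (u n) x ≤ 0)
    (hbig : a / b < Filter.liminf (fun n => u n 0) atTop)
    (hbdd : Filter.IsBoundedUnder (· ≤ ·) atTop (fun n => u n 0))
    (c d : ℝ) (hc : 0 < c) (hcd : c < d) (hdL : d < L)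
    (hsmall : Filter.limsup (fun n => sSup (u n '' Icc c d)) atTop < a / b) :
    ∀ K : Set ℝ, IsCompact K → K ⊆ Ioo (0 : ℝ) L →
      TendstoUniformlyOn (fun n => u n) (fun _ => (0 : ℝ)) atTop K :=
  stmt_17_general a b μ ν L ha hb hμ hν hL χ hχ u v hsol hmono hbdd c d hc hcd hdL hsmall
end
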